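/- arXiv:1204.3664 — 2 statements merged into one kernel-verified Lean document; each statement's English description precedes it below -/
import Mathlib

section
/- If z is an element of a unital C*-algebra with ‖z² − z‖ < τ for τ < 1/4, then the spectrum of z is contained in the union of the open disks of radius 1/2 centered at 0 and at 1; in particular 1/2 is not in the spectrum of z. -/
open Metric Polynomial

namespace spectrum

variable {𝕜 A : Type*} [NormedField 𝕜] [NormedRing A] [NormedAlgebra 𝕜 A] [CompleteSpace A]
  [NormOneClass A]

theorem norm_mul_self_sub_le {a : A} {k : 𝕜} (hk : k ∈ spectrum 𝕜 a) :
    ‖k * k - k‖ ≤ ‖a * a - a‖ := by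
  have hmem : k * k - k ∈ spectrum 𝕜 (a * a - a) := by
    have := subset_polynomial_aeval a (X * X - X : 𝕜[X]) ⟨k, hk, rfl⟩
    simpa using this
  exact norm_le_norm_of_mem hmem

end spectrum

theorem mem_ball_zero_union_ball_one_of_norm_mul_self_sub_lt {𝕜 : Type*} [NormedField 𝕜]
    {x : 𝕜} (hx : ‖x * x - x‖ < 1 / 4) : x ∈ ball (0 : 𝕜) (1 / 2) ∪ ball (1 : 𝕜) (1 / 2) := by
  by_contra h
  simp only [Set.mem_union, mem_ball, dist_eq_norm, sub_zero, not_or, not_lt] at h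
  obtain ⟨h0, h1⟩ := h
  have : (1 / 4 : ℝ) ≤ ‖x * x - x‖ :=
    calc (1 / 4 : ℝ) = 1 / 2 * (1 / 2) := by norm_num
      _ ≤ ‖x‖ * ‖x - 1‖ := mul_le_mul h0 h1 (by norm_num) (norm_nonneg x)
      _ = ‖x * x - x‖ := by rw [← norm_mul, mul_sub, mul_one]
  linarith

theorem RCLike.half_notMem_ball_zero_union_ball_one {𝕜 : Type*} [RCLike 𝕜] :
    (1 / 2 : 𝕜) ∉ ball (0 : 𝕜) (1 / 2) ∪ ball (1 : 𝕜) (1 / 2) := by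
  have h_half : ‖(1 / 2 : 𝕜)‖ = 1 / 2 := by simp
  have h_half_sub : ‖(1 / 2 : 𝕜) - 1‖ = 1 / 2 := by
    rw [show (1 / 2 : 𝕜) - 1 = -(1 / 2) by ring, norm_neg, h_half]
  simp only [Set.mem_union, mem_ball, dist_eq_norm, sub_zero, h_half, h_half_sub, lt_irrefl,
    or_self, not_false_eq_true]

open Metric in
theorem stmt3_general {A : Type*} [NormedRing A] [StarRing A] [CStarRing A] [CompleteSpace A]
    [NormedAlgebra ℂ A] (z : A) (τ : ℝ) (hτ : τ < 1 / 4)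
    (hz : ‖z * z - z‖ < τ) :
    spectrum ℂ z ⊆ ball (0 : ℂ) (1 / 2) ∪ ball (1 : ℂ) (1 / 2) ∧
      (1 / 2 : ℂ) ∉ spectrum ℂ z := by
  -- a nontrivial C*-algebra has `‖1‖ = 1`, which `spectrum.norm_mul_self_sub_le` needs
  nontriviality A
  have hsub : spectrum ℂ z ⊆ ball (0 : ℂ) (1 / 2) ∪ ball (1 : ℂ) (1 / 2) := fun k hk =>
    mem_ball_zero_union_ball_one_of_norm_mul_self_sub_lt <|
      (spectrum.norm_mul_self_sub_le hk).trans_lt (hz.trans hτ)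
  exact ⟨hsub, fun h => RCLike.half_notMem_ball_zero_union_ball_one (hsub h)⟩

open Metric in
/-- If `z` is an element of a unital C*-algebra with `‖z² − z‖ < τ` for `τ < 1/4`,
then the spectrum of `z` is contained in the union of the open disks of radius `1/2`
centered at `0` and at `1`; in particular `1/2` is not in the spectrum of `z`. -/
theorem stmt3 {A : Type*} [NormedRing A] [StarRing A] [CStarRing A] [CompleteSpace A]
    [NormedAlgebra ℂ A] [StarModule ℂ A] (z : A) (τ : ℝ) (hτ0 : 0 < τ) (hτ : τ < 1 / 4)
    (hz : ‖z * z - z‖ < τ) :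
    spectrum ℂ z ⊆ ball (0 : ℂ) (1 / 2) ∪ ball (1 : ℂ) (1 / 2) ∧
      (1 / 2 : ℂ) ∉ spectrum ℂ z :=
  stmt3_general z τ hτ hz
end

section
/- Let p, q be idempotents in a unital ring B with p − q ∈ I for a two-sided ideal I. Define E₀(p,q) = Z(q)⁻¹ · diag(p, 1−q, 0, 0) · Z(q) with Z(q) as above. Then E₀(p,q) = [[1 + q(p−q)q, 0, qp(p−q), 0],[0,0,0,0],[(p−q)pq, 0, (1−q)(p−q)(1−q), 0],[0,0,0,0]]; in particular E₀(p,q) is an idempotent and E₀(p,q) − diag(1,0,0,0) ∈ M₄(I). -/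
/-!
`Z(q)` is invertible with the displayed inverse as soon as `q` is idempotent, so `E₀(p,q)` is
conjugate to the idempotent `diag(p, 1 - q, 0, 0)` and is therefore idempotent. Multiplying out,
`E₀(p,q)` has corner entries `qpq + (1 - q)`, `qp(1 - q)`, `(1 - q)pq`, `(1 - q)p(1 - q)`, which
`p² = p` and `q² = q` turn into the stated form; after subtracting `diag(1,0,0,0)` every entry is
a multiple of `p - q` and so lies in `I`.
-/

open Matrix

theorem IsIdempotentElem.mul_mul_of_mul_eq_one {M : Type*} [Monoid M] {e u v : M}
    (he : IsIdempotentElem e) (huv : u * v = 1) : IsIdempotentElem (v * e * u) :=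
  calc v * e * u * (v * e * u) = v * e * (u * v) * e * u := by simp only [mul_assoc]
    _ = v * e * u := by rw [huv, mul_one, he.mul_mul_self]

namespace DifferenceConstruction

variable {B : Type*} [Ring B] {p q : B}

def zMatrix (q : B) : Matrix (Fin 4) (Fin 4) B :=
  !![q, 0, 1 - q, 0; 1 - q, 0, 0, q; 0, 0, q, 1 - q; 0, 1, 0, 0]

def zMatrixInv (q : B) : Matrix (Fin 4) (Fin 4) B :=
  !![q, 1 - q, 0, 0; 0, 0, 0, 1; 1 - q, 0, q, 0; 0, q, 1 - q, 0]

def blockDiag (p q : B) : Matrix (Fin 4) (Fin 4) B :=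
  !![p, 0, 0, 0; 0, 1 - q, 0, 0; 0, 0, 0, 0; 0, 0, 0, 0]

theorem mul_one_sub_self (hq : IsIdempotentElem q) : q * (1 - q) = 0 := by
  rw [mul_sub, mul_one, hq.eq, sub_self]

theorem one_sub_mul_self (hq : IsIdempotentElem q) : (1 - q) * q = 0 := by
  rw [sub_mul, one_mul, hq.eq, sub_self]

theorem zMatrix_mul_zMatrixInv (hq : IsIdempotentElem q) : zMatrix q * zMatrixInv q = 1 := by
  ext i j
  fin_cases i <;> fin_cases j <;>
    simp [zMatrix, zMatrixInv, mul_apply, Fin.sum_univ_four, one_apply, hq.eq, hq.one_sub.eq,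
      mul_one_sub_self hq, one_sub_mul_self hq]

theorem isIdempotentElem_blockDiag (hp : IsIdempotentElem p) (hq : IsIdempotentElem q) :
    IsIdempotentElem (blockDiag p q) := by
  ext i j
  fin_cases i <;> fin_cases j <;>
    simp [blockDiag, mul_apply, Fin.sum_univ_four, hp.eq, hq.one_sub.eq]

theorem zMatrixInv_mul_blockDiag_mul_zMatrix (hq : IsIdempotentElem q) :
    zMatrixInv q * blockDiag p q * zMatrix q =
      !![q * p * q + (1 - q), 0, q * p * (1 - q), 0;
         0, 0, 0, 0;
         (1 - q) * p * q, 0, (1 - q) * p * (1 - q), 0;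
         0, 0, 0, 0] := by
  ext i j
  fin_cases i <;> fin_cases j <;>
    simp [zMatrix, zMatrixInv, blockDiag, mul_apply, Fin.sum_univ_four, hq.one_sub.eq,
      mul_one_sub_self hq, one_sub_mul_self hq]

theorem zMatrixInv_mul_blockDiag_mul_zMatrix_eq (hp : IsIdempotentElem p)
    (hq : IsIdempotentElem q) :
    zMatrixInv q * blockDiag p q * zMatrix q =
      !![1 + q * (p - q) * q, 0, q * p * (p - q), 0;
         0, 0, 0, 0;
         (p - q) * p * q, 0, (1 - q) * (p - q) * (1 - q), 0;
         0, 0, 0, 0] := by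
  have h₀₀ : q * p * q + (1 - q) = 1 + q * (p - q) * q := by
    rw [mul_sub, sub_mul, hq.mul_mul_self, hq.eq]; abel
  have h₀₂ : q * p * (1 - q) = q * p * (p - q) := by
    rw [mul_sub, mul_sub, mul_one, hp.mul_mul_self]
  have h₂₀ : (1 - q) * p * q = (p - q) * p * q := by
    rw [sub_mul 1 q p, sub_mul p q p, one_mul, hp.eq]
  have h₂₂ : (1 - q) * p * (1 - q) = (1 - q) * (p - q) * (1 - q) := by
    rw [mul_sub (1 - q) p q, sub_mul _ _ (1 - q), mul_assoc (1 - q) q, mul_one_sub_self hq,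
      mul_zero, sub_zero]
  rw [zMatrixInv_mul_blockDiag_mul_zMatrix hq, h₀₀, h₀₂, h₂₀, h₂₂]

end DifferenceConstruction

open DifferenceConstruction in
/-- Difference construction: for idempotents `p, q` in a unital ring `B` with
`p − q ∈ I`, the element `E₀(p,q) = Z(q)⁻¹·diag(p,1−q,0,0)·Z(q)` equals the explicit
matrix below; in particular it is an idempotent and
`E₀(p,q) − diag(1,0,0,0) ∈ M₄(I)`. -/
theorem stmt7 {B : Type*} [Ring B] (I : TwoSidedIdeal B) (p q : B)
    (hp : p * p = p) (hq : q * q = q) (hpq : p - q ∈ I)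
    (Z Zinv E₀ : Matrix (Fin 4) (Fin 4) B)
    (hZ : Z = !![q, 0, 1 - q, 0; 1 - q, 0, 0, q; 0, 0, q, 1 - q; 0, 1, 0, 0])
    (hZinv : Zinv = !![q, 1 - q, 0, 0; 0, 0, 0, 1; 1 - q, 0, q, 0; 0, q, 1 - q, 0])
    (hE : E₀ = Zinv * !![p, 0, 0, 0; 0, 1 - q, 0, 0; 0, 0, 0, 0; 0, 0, 0, 0] * Z) :
    E₀ = !![1 + q * (p - q) * q, 0, q * p * (p - q), 0;
            0, 0, 0, 0;
            (p - q) * p * q, 0, (1 - q) * (p - q) * (1 - q), 0;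
            0, 0, 0, 0] ∧
      E₀ * E₀ = E₀ ∧
      (∀ i j : Fin 4,
        ((E₀ - !![1, 0, 0, 0; 0, 0, 0, 0; 0, 0, 0, 0; 0, 0, 0, 0] :
          Matrix (Fin 4) (Fin 4) B)) i j ∈ I) := by
  have hE' : E₀ = zMatrixInv q * blockDiag p q * zMatrix q := by rw [hE, hZ, hZinv]; rfl
  have hform := hE'.trans (zMatrixInv_mul_blockDiag_mul_zMatrix_eq hp hq)
  refine ⟨hform, hE' ▸ (isIdempotentElem_blockDiag hp hq).mul_mul_of_mul_eq_one
    (zMatrix_mul_zMatrixInv hq), fun i j => ?_⟩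
  rw [hform]
  fin_cases i <;> fin_cases j <;> simp
  exacts [I.mul_mem_right _ _ (I.mul_mem_left _ _ hpq), I.mul_mem_left _ _ hpq,
    I.mul_mem_right _ _ (I.mul_mem_right _ _ hpq), I.mul_mem_right _ _ (I.mul_mem_left _ _ hpq)]
end
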